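/- arXiv:math/9908125 — 4 statements merged into one kernel-verified Lean document; each statement's English description precedes it below -/
import Mathlib

section
/- Let h : F^n → F^n be a continuous map with h(0) = 0 that is differentiable at 0 with derivative Dh|_0 an F-linear isomorphism. Define ĥ : X → X by ĥ(x,[x]) = (h(x), [h(x)]) for x ≠ 0 and ĥ(0,[y]) = (0, [Dh|_0(y)]). Then ĥ is continuous and maps Σ to Σ. -/
open scoped LinearAlgebra.Projectivization

/-- Quotient topology on projectivization. -/
instance projTopology (𝕜 V : Type*) [DivisionRing 𝕜] [AddCommGroup V] [Module 𝕜 V]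
    [TopologicalSpace V] : TopologicalSpace (ℙ 𝕜 V) :=
  inferInstanceAs (TopologicalSpace (Quotient (projectivizationSetoid 𝕜 V)))

/-- The classical blowup of `F^n` at the origin. -/
def blowupAtOrigin (𝕜 : Type*) [RCLike 𝕜] (n : ℕ) :
    Set ((Fin n → 𝕜) × ℙ 𝕜 (Fin n → 𝕜)) :=
  {p | ∃ μ : 𝕜, p.1 = μ • p.2.rep}

/-- `hHat` is the blowup lift of `h` (with derivative `D` at the origin):
`hHat(x,[x]) = (h x, [h x])` off the exceptional locus and
`hHat(0,[y]) = (0, [D y])` on it. -/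
def BlowupLiftSpec (𝕜 : Type*) [RCLike 𝕜] (n : ℕ)
    (h : (Fin n → 𝕜) → (Fin n → 𝕜)) (D : (Fin n → 𝕜) ≃L[𝕜] (Fin n → 𝕜))
    (hHat : ↥(blowupAtOrigin 𝕜 n) → ↥(blowupAtOrigin 𝕜 n)) : Prop :=
  (∀ (p : ↥(blowupAtOrigin 𝕜 n))
      (_ : (p : (Fin n → 𝕜) × ℙ 𝕜 (Fin n → 𝕜)).1 ≠ 0)
      (hh : h (p : (Fin n → 𝕜) × ℙ 𝕜 (Fin n → 𝕜)).1 ≠ 0),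
      ((hHat p : ↥(blowupAtOrigin 𝕜 n)) : (Fin n → 𝕜) × ℙ 𝕜 (Fin n → 𝕜))
        = (h (p : (Fin n → 𝕜) × ℙ 𝕜 (Fin n → 𝕜)).1,
           Projectivization.mk 𝕜 (h (p : (Fin n → 𝕜) × ℙ 𝕜 (Fin n → 𝕜)).1) hh)) ∧
  (∀ (p : ↥(blowupAtOrigin 𝕜 n)),
      (p : (Fin n → 𝕜) × ℙ 𝕜 (Fin n → 𝕜)).1 = 0 →
      ((hHat p : ↥(blowupAtOrigin 𝕜 n)) : (Fin n → 𝕜) × ℙ 𝕜 (Fin n → 𝕜))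
        = (0, Projectivization.map ((D : (Fin n → 𝕜) →L[𝕜] (Fin n → 𝕜)) :
              (Fin n → 𝕜) →ₗ[𝕜] (Fin n → 𝕜)) D.injective
              (p : (Fin n → 𝕜) × ℙ 𝕜 (Fin n → 𝕜)).2))

/-! Off the exceptional locus the lift is `(h x, [h x])`, continuous because `h` does not vanish
there. Near a point `(0, [u])` of the exceptional locus, a nearby point `(x, ℓ)` has a
representative `w` of `ℓ` close to `u`, and if `x ≠ 0` then `w = c • x` for a scalar `c`. Then
`c • h x = D w + c • (h x - D x)`, where the error is `o(‖c • x‖) = o(1)` by differentiability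
at `0`, so `[h x] = [c • h x]` is close to `[D u]`. Closeness in `ℙ` can be tested on
representatives because the quotient map is open, scalar multiplication being a homeomorphism. -/

open Topology Filter Asymptotics

namespace Projectivization

variable {K V : Type*} [DivisionRing K] [AddCommGroup V] [Module K V] [TopologicalSpace V]
  [ContinuousConstSMul K V]

theorem isOpenMap_mk' : IsOpenMap (mk' K : {v : V // v ≠ 0} → ℙ K V) := by
  intro U hU
  have hsat : mk' K ⁻¹' (mk' K '' U) = ⋃ a : Kˣ,
      (fun w : {v : V // v ≠ 0} => (⟨(a : K) • (w : V), smul_ne_zero a.ne_zero w.2⟩ :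
        {v : V // v ≠ 0})) ⁻¹' U := by
    ext w
    simp only [Set.mem_preimage, Set.mem_image, Set.mem_iUnion, mk'_eq_mk, mk_eq_mk_iff]
    constructor
    · rintro ⟨v, hvU, a, ha⟩
      exact ⟨a, (Subtype.ext ha : (⟨(a : K) • (w : V), _⟩ : {v : V // v ≠ 0}) = v) ▸ hvU⟩
    · rintro ⟨a, haU⟩
      exact ⟨_, haU, a, rfl⟩
  exact isQuotientMap_quot_mk.isOpen_preimage.1 <| hsat ▸ isOpen_iUnion fun a =>
    hU.preimage ((continuous_subtype_val.const_smul _).subtype_mk _)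

theorem tendsto_nhds_mk_iff {α : Type*} {l : Filter α} {G : α → ℙ K V} {z : V} (hz : z ≠ 0) :
    Tendsto G l (𝓝 (mk K z hz)) ↔
      ∀ U ∈ 𝓝 z, ∀ᶠ a in l, ∃ v ∈ U, ∃ hv : v ≠ 0, mk K v hv = G a := by
  have hmap : 𝓝 (mk K z hz) = Filter.map (mk' K) (comap Subtype.val (𝓝 z)) := by
    rw [← nhds_subtype_eq_comap, isOpenMap_mk'.map_nhds_eq continuous_quot_mk.continuousAt]
    rfl
  rw [hmap, ((𝓝 z).basis_sets.comap _).map _ |>.tendsto_right_iff]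
  simp [mk'_eq_mk]

end Projectivization

theorem HasFDerivAt.tendsto_smul_apply_of_tendsto_smul {𝕜 E F α : Type*}
    [NontriviallyNormedField 𝕜] [NormedAddCommGroup E] [NormedSpace 𝕜 E]
    [NormedAddCommGroup F] [NormedSpace 𝕜 F] {f : E → F} {f' : E →L[𝕜] F}
    (hf : HasFDerivAt f f' 0) (hf0 : f 0 = 0) {l : Filter α} {c : α → 𝕜} {x : α → E} {u : E}
    (hx : Tendsto x l (𝓝 0)) (hcx : Tendsto (fun a => c a • x a) l (𝓝 u)) :
    Tendsto (fun a => c a • f (x a)) l (𝓝 (f' u)) := by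
  have hrem : (fun a => c a • (f (x a) - f' (x a))) =o[l] (fun _ => (1 : ℝ)) := by
    have := (isBigO_refl c l).smul_isLittleO (hf.isLittleO.comp_tendsto hx)
    simp only [Function.comp_def, hf0, sub_zero] at this
    exact this.trans_isBigO (hcx.isBigO_one ℝ)
  have hsplit : (fun a => c a • f (x a)) =
      fun a => f' (c a • x a) + c a • (f (x a) - f' (x a)) := by
    ext a; rw [map_smul, smul_sub, add_sub_cancel]
  rw [hsplit, ← add_zero (f' u)]
  exact (f'.continuous.tendsto u |>.comp hcx).add (isLittleO_one_iff ℝ |>.1 hrem)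

open Projectivization

theorem blowupAtOrigin.snd_eq_mk {𝕜 : Type*} [RCLike 𝕜] {n : ℕ} (p : blowupAtOrigin 𝕜 n)
    (hp : p.1.1 ≠ 0) : p.1.2 = mk 𝕜 p.1.1 hp := by
  obtain ⟨μ, hμ⟩ := p.2
  have hμ0 : μ ≠ 0 := by rintro rfl; exact hp (by rw [hμ, zero_smul])
  conv_lhs => rw [← mk_rep p.1.2]
  exact (mk_eq_mk_iff' 𝕜 _ _ _ _).2 ⟨μ⁻¹, by rw [hμ, inv_smul_smul₀ hμ0]⟩

namespace BlowupLiftSpec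

variable {𝕜 : Type*} [RCLike 𝕜] {n : ℕ} {h : (Fin n → 𝕜) → (Fin n → 𝕜)}
  {D : (Fin n → 𝕜) ≃L[𝕜] (Fin n → 𝕜)} {hHat : blowupAtOrigin 𝕜 n → blowupAtOrigin 𝕜 n}

theorem fst_apply (hspec : BlowupLiftSpec 𝕜 n h D hHat) (h0 : h 0 = 0)
    (hne : ∀ x : Fin n → 𝕜, x ≠ 0 → h x ≠ 0) (p : blowupAtOrigin 𝕜 n) :
    (hHat p).1.1 = h p.1.1 := by
  by_cases hp : p.1.1 = 0
  · rw [hspec.2 p hp, hp, h0]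
  · rw [hspec.1 p hp (hne _ hp)]

theorem snd_apply_of_fst_eq_zero (hspec : BlowupLiftSpec 𝕜 n h D hHat)
    {q : blowupAtOrigin 𝕜 n} (hq : q.1.1 = 0) {w : Fin n → 𝕜} (hw : w ≠ 0)
    (hwq : mk 𝕜 w hw = q.1.2) : (hHat q).1.2 = mk 𝕜 (D w) (D.map_ne_zero_iff.2 hw) := by
  rw [congrArg Prod.snd (hspec.2 q hq), ← hwq]
  exact map_mk _ D.injective w hw

theorem continuousAt_snd_of_fst_ne_zero (hspec : BlowupLiftSpec 𝕜 n h D hHat)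
    (hcont : Continuous h) (hne : ∀ x : Fin n → 𝕜, x ≠ 0 → h x ≠ 0) {p : blowupAtOrigin 𝕜 n}
    (hp : p.1.1 ≠ 0) : ContinuousAt (fun q => (hHat q).1.2) p := by
  have hG (q : blowupAtOrigin 𝕜 n) (hq : q.1.1 ≠ 0) : (hHat q).1.2 = mk 𝕜 (h q.1.1) (hne _ hq) :=
    congrArg Prod.snd (hspec.1 q hq _)
  rw [ContinuousAt, hG p hp, tendsto_nhds_mk_iff]
  intro U hU
  have hfst : ContinuousAt (fun q : blowupAtOrigin 𝕜 n => q.1.1) p :=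
    continuous_subtype_val.fst.continuousAt
  filter_upwards [(hcont.continuousAt.comp hfst) hU, hfst (isOpen_ne.mem_nhds hp)] with q hqU hq
  exact ⟨_, hqU, hne _ hq, (hG q hq).symm⟩

theorem continuousAt_snd_of_fst_eq_zero (hspec : BlowupLiftSpec 𝕜 n h D hHat) (h0 : h 0 = 0)
    (hne : ∀ x : Fin n → 𝕜, x ≠ 0 → h x ≠ 0)
    (hD : HasFDerivAt h (D : (Fin n → 𝕜) →L[𝕜] (Fin n → 𝕜)) 0) {p : blowupAtOrigin 𝕜 n}
    (hp : p.1.1 = 0) : ContinuousAt (fun q => (hHat q).1.2) p := by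
  have hu := p.1.2.rep_nonzero
  rw [ContinuousAt, hspec.snd_apply_of_fst_eq_zero hp hu (mk_rep _), tendsto_nhds_mk_iff]
  intro U hU
  have hslope : ∀ᶠ xw in 𝓝 ((0 : Fin n → 𝕜), p.1.2.rep),
      ∀ c : 𝕜, c • xw.1 = xw.2 → c • h xw.1 ∈ U := by
    -- the slope lemma along the filter of pairs `(c, x)` with `(x, c • x)` near `(0, u)`
    have := hD.tendsto_smul_apply_of_tendsto_smul h0
      (l := comap (fun a : 𝕜 × (Fin n → 𝕜) => (a.2, a.1 • a.2)) (𝓝 (0, p.1.2.rep)))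
      (c := Prod.fst) (x := Prod.snd) ((continuous_fst.tendsto _).comp tendsto_comap)
      ((continuous_snd.tendsto _).comp tendsto_comap) hU
    filter_upwards [eventually_comap.1 this] with xw hxw c hc
    exact hxw (c, xw.1) (by rw [hc])
  obtain ⟨X, hX, W, hW, hXW⟩ := mem_nhds_prod_iff.1 hslope
  have hrep : ∀ᶠ q in 𝓝 p, ∃ w ∈ W ∩ D ⁻¹' U, ∃ hw : w ≠ 0, mk 𝕜 w hw = q.1.2 := by
    refine (tendsto_nhds_mk_iff hu).1 ?_ _ (inter_mem hW (D.continuous.continuousAt hU))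
    rw [mk_rep]
    exact continuous_subtype_val.snd.continuousAt
  have hfst : Tendsto (fun q : blowupAtOrigin 𝕜 n => q.1.1) (𝓝 p) (𝓝 0) :=
    hp ▸ continuous_subtype_val.fst.continuousAt
  filter_upwards [hrep, hfst hX] with q ⟨w, ⟨hwW, hwU⟩, hw, hwq⟩ hqX
  by_cases hq : q.1.1 = 0
  · exact ⟨_, hwU, _, (hspec.snd_apply_of_fst_eq_zero hq hw hwq).symm⟩
  · obtain ⟨a, ha⟩ := (mk_eq_mk_iff 𝕜 _ _ hw hq).1 (hwq.trans (blowupAtOrigin.snd_eq_mk q hq))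
    refine ⟨(a : 𝕜) • h q.1.1, hXW (Set.mk_mem_prod hqX hwW) a ha,
      smul_ne_zero a.ne_zero (hne _ hq), ?_⟩
    rw [congrArg Prod.snd (hspec.1 q hq (hne _ hq))]
    exact (mk_eq_mk_iff 𝕜 _ _ _ _).2 ⟨a, rfl⟩

end BlowupLiftSpec

/-- If `h : F^n → F^n` is continuous, fixes the origin, is nonvanishing away
from the origin, and is differentiable at `0` with an `F`-linear isomorphism `D` as
derivative, then the lift `hHat` is continuous and maps the exceptional locus `Σ` to `Σ`. -/
theorem blowup_lift_continuous (𝕜 : Type*) [RCLike 𝕜] (n : ℕ)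
    (h : (Fin n → 𝕜) → (Fin n → 𝕜)) (hcont : Continuous h) (h0 : h 0 = 0)
    (hne : ∀ x : Fin n → 𝕜, x ≠ 0 → h x ≠ 0)
    (D : (Fin n → 𝕜) ≃L[𝕜] (Fin n → 𝕜))
    (hD : HasFDerivAt h (D : (Fin n → 𝕜) →L[𝕜] (Fin n → 𝕜)) 0)
    (hHat : ↥(blowupAtOrigin 𝕜 n) → ↥(blowupAtOrigin 𝕜 n))
    (hspec : BlowupLiftSpec 𝕜 n h D hHat) :
    Continuous hHat ∧
      ∀ p : ↥(blowupAtOrigin 𝕜 n), (p : (Fin n → 𝕜) × ℙ 𝕜 (Fin n → 𝕜)).1 = 0 →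
        ((hHat p : ↥(blowupAtOrigin 𝕜 n)) : (Fin n → 𝕜) × ℙ 𝕜 (Fin n → 𝕜)).1 = 0 := by
  refine ⟨?_, fun p hp => by rw [hspec.2 p hp]⟩
  refine continuous_induced_rng.2 (continuous_prodMk.2 ⟨?_, ?_⟩)
  · simpa only [Function.comp_def, hspec.fst_apply h0 hne] using
      hcont.comp continuous_subtype_val.fst
  · exact continuous_iff_continuousAt.2 fun p =>
      if hp : p.1.1 = 0 then hspec.continuousAt_snd_of_fst_eq_zero h0 hne hD hp
      else hspec.continuousAt_snd_of_fst_ne_zero hcont hne hp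
end

section
/- Let h : ℝ² → ℝ² be the C¹ diffeomorphism h(x,y) = (x + x|x|, y), fixing the origin with Dh|_0 = Id, and let ĥ be its blowup lift on the blowup X of ℝ² at the origin. For m ≠ 0, the curve c(t) = ((t, mt), [t, mt]) (with c(0) = ((0,0), [1,m])) is a smooth curve in X, but the composite ĥ ∘ c is not differentiable at t = 0; hence ĥ is not differentiable at the point ((0,0),[1,m]) of the exceptional locus. -/
open scoped LinearAlgebra.Projectivization

/-- Ratio of coordinates of the rep of `mk v` equals the ratio for `v`. -/
lemma rep_ratio (v : Fin 2 → ℝ) (hv : v ≠ 0) :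
    (Projectivization.mk ℝ v hv).rep 0 / (Projectivization.mk ℝ v hv).rep 1
      = v 0 / v 1 := by
  obtain ⟨a, ha⟩ := Projectivization.exists_smul_eq_mk_rep ℝ v hv
  rw [← ha]
  simp only [Pi.smul_apply, Units.smul_def, smul_eq_mul]
  rw [mul_div_mul_left _ _ (Units.ne_zero a)]

/-- Regularity loss example.  For the `C¹` diffeomorphism
`h(x,y) = (x + x|x|, y)` of `ℝ²` (fixing the origin, with `Dh|₀ = Id`) and its blowup
lift `ĥ`, the smooth curve `c(t) = ((t, mt), [1, m])` in the blowup `X` (`m ≠ 0`) has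
the property that the chart coordinate `u/v` of the projective component of `ĥ(c(t))`
equals `m⁻¹(1 + |t|)`, which is not differentiable at `t = 0`; hence `ĥ ∘ c` — and
therefore `ĥ` itself at the point `((0,0),[1,m])` of the exceptional locus — is not
differentiable. -/
theorem blowup_lift_regularity_loss (m : ℝ) (hm : m ≠ 0)
    (h : (Fin 2 → ℝ) → (Fin 2 → ℝ))
    (hdef : ∀ v : Fin 2 → ℝ, h v = ![v 0 + v 0 * |v 0|, v 1])
    (hHat : ↥(blowupAtOrigin ℝ 2) → ↥(blowupAtOrigin ℝ 2))
    (hspec : BlowupLiftSpec ℝ 2 h (ContinuousLinearEquiv.refl ℝ (Fin 2 → ℝ)) hHat)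
    (h1m : (![1, m] : Fin 2 → ℝ) ≠ 0)
    (c : ℝ → ↥(blowupAtOrigin ℝ 2))
    (hc : ∀ t : ℝ, (c t : (Fin 2 → ℝ) × ℙ ℝ (Fin 2 → ℝ))
        = (![t, m * t], Projectivization.mk ℝ ![1, m] h1m)) :
    ContDiff ℝ (⊤ : ℕ∞) (fun t : ℝ => (![t, m * t] : Fin 2 → ℝ)) ∧
    Continuous c ∧
    (∀ t : ℝ,
      ((hHat (c t) : (Fin 2 → ℝ) × ℙ ℝ (Fin 2 → ℝ)).2.rep 0)
          / ((hHat (c t) : (Fin 2 → ℝ) × ℙ ℝ (Fin 2 → ℝ)).2.rep 1)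
        = m⁻¹ * (1 + |t|)) ∧
    ¬ DifferentiableAt ℝ
        (fun t : ℝ =>
          ((hHat (c t) : (Fin 2 → ℝ) × ℙ ℝ (Fin 2 → ℝ)).2.rep 0)
            / ((hHat (c t) : (Fin 2 → ℝ) × ℙ ℝ (Fin 2 → ℝ)).2.rep 1)) 0 := by
  have key : ∀ t : ℝ,
      ((hHat (c t) : (Fin 2 → ℝ) × ℙ ℝ (Fin 2 → ℝ)).2.rep 0)
          / ((hHat (c t) : (Fin 2 → ℝ) × ℙ ℝ (Fin 2 → ℝ)).2.rep 1)
        = m⁻¹ * (1 + |t|) := by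
    intro t
    by_cases ht : t = 0
    · subst ht
      have h0 : ((c 0 : (Fin 2 → ℝ) × ℙ ℝ (Fin 2 → ℝ))).1 = 0 := by
        rw [hc]
        funext i
        fin_cases i <;> simp
      have := hspec.2 (c 0) h0
      rw [this]
      have h2 : ((c 0 : (Fin 2 → ℝ) × ℙ ℝ (Fin 2 → ℝ))).2
          = Projectivization.mk ℝ ![1, m] h1m := by rw [hc]
      rw [h2]
      have h3 : Projectivization.map (((ContinuousLinearEquiv.refl ℝ (Fin 2 → ℝ)) :
            (Fin 2 → ℝ) →L[ℝ] (Fin 2 → ℝ)) : (Fin 2 → ℝ) →ₗ[ℝ] (Fin 2 → ℝ))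
            (ContinuousLinearEquiv.refl ℝ (Fin 2 → ℝ)).injective
            (Projectivization.mk ℝ ![1, m] h1m) = Projectivization.mk ℝ ![1, m] h1m := by
        exact Projectivization.map_mk _ _ _ _
      rw [h3]
      rw [rep_ratio]
      simp
    · have hne : ((c t : (Fin 2 → ℝ) × ℙ ℝ (Fin 2 → ℝ))).1 ≠ 0 := by
        rw [hc]
        intro hz
        exact ht (by simpa using congrFun hz 0)
      have hh : h ((c t : (Fin 2 → ℝ) × ℙ ℝ (Fin 2 → ℝ))).1 ≠ 0 := by
        rw [hc, hdef]
        intro hz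
        have := congrFun hz 1
        simp only [Matrix.cons_val_zero, Matrix.cons_val_one, Matrix.head_cons, Pi.zero_apply] at this
        exact mul_ne_zero hm ht this
      have := hspec.1 (c t) hne hh
      rw [this]
      simp only
      rw [rep_ratio]
      have h1 : ((c t : (Fin 2 → ℝ) × ℙ ℝ (Fin 2 → ℝ))).1 = ![t, m * t] := by rw [hc]
      rw [h1, hdef]
      simp only [Matrix.cons_val_zero, Matrix.cons_val_one, Matrix.head_cons]
      field_simp
  refine ⟨?_, ?_, key, ?_⟩
  · apply contDiff_pi.mpr
    intro i
    fin_cases i <;> simp <;> fun_prop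
  · rw [continuous_induced_rng]
    have : (Subtype.val ∘ c) = fun t : ℝ =>
        ((![t, m * t] : Fin 2 → ℝ), Projectivization.mk ℝ ![1, m] h1m) := by
      funext t; exact hc t
    rw [this]
    refine Continuous.prodMk ?_ continuous_const
    apply continuous_pi
    intro i
    fin_cases i <;> simp <;> fun_prop
  · intro hd
    have : DifferentiableAt ℝ (fun t : ℝ => |t|) 0 := by
      have h2 : (fun t : ℝ => |t|) = fun t : ℝ =>
          m * (((hHat (c t) : (Fin 2 → ℝ) × ℙ ℝ (Fin 2 → ℝ)).2.rep 0)
            / ((hHat (c t) : (Fin 2 → ℝ) × ℙ ℝ (Fin 2 → ℝ)).2.rep 1)) - 1 := by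
        funext t
        rw [key t]
        field_simp
        ring
      rw [h2]
      exact (hd.const_mul m).sub_const 1
    exact not_differentiableAt_abs_zero this
end

section
/- Let N be a connected topological manifold without boundary of dimension k ≥ 1, and let (x_i) and (y_i) be sequences in N × (0,∞) such that the second coordinates of both sequences are strictly increasing and tend to ∞. Then there exists a homeomorphism g of N × (0,∞) such that g(x_i) = y_i for every i, and g restricts to the identity on N × (0,ε] for some ε > 0. -/
/-!
For points `p, q` of a connected manifold `N` there is a homeomorphism of `N × ℝ` that preserves
every level `N × {t}`, is supported in `N × (0, 1)` and sends `(p, 1/2)` to `(q, 1/2)`: in a chart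
take `z ↦ z + β z • (q - p, 0)` with `β` a cone bump, a homeomorphism because it is a small
Lipschitz perturbation of the identity, and let connectedness spread this from nearby pairs to
all pairs. Rescaled copies, one in each of a locally finite family of disjoint slabs around the
heights of the `y i`, glue to a single homeomorphism; composed with a piecewise-linear
homeomorphism of the height axis carrying the heights of the `x i` to those of the `y i`, it moves
every `x i` to `y i` and is the identity at low heights. Finally `exp` identifies `ℝ` with
`(0, ∞)`.
-/

open Set Filter Metric Topology Function

noncomputable section

section SlabGroup

variable (N : Type*) [TopologicalSpace N]

def slabGroup (s : Set ℝ) : Subgroup (N × ℝ ≃ₜ N × ℝ) where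
  carrier := {F | (∀ z, (F z).2 = z.2) ∧ ∀ z, z.2 ∉ s → F z = z}
  mul_mem' {F G} hF hG :=
    ⟨fun z => by simp [hF.1, hG.1], fun z hz => by simp [hG.2 z hz, hF.2 z hz]⟩
  one_mem' := ⟨fun _ => rfl, fun _ _ => rfl⟩
  inv_mem' {F} hF := by
    refine ⟨fun z => ?_, fun z hz => ?_⟩
    · simpa using (hF.1 (F.symm z)).symm
    · simpa [F.symm_apply_eq] using (hF.2 z hz).symm

variable {N} {s t : Set ℝ} {F : N × ℝ ≃ₜ N × ℝ}

namespace slabGroup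

theorem snd_apply (hF : F ∈ slabGroup N s) (z : N × ℝ) : (F z).2 = z.2 := hF.1 z

theorem apply_eq_self (hF : F ∈ slabGroup N s) {z : N × ℝ} (hz : z.2 ∉ s) : F z = z := hF.2 z hz

theorem conj_mem (α : ℝ ≃ₜ ℝ) (hα : MapsTo α s t) (hF : F ∈ slabGroup N s) :
    (Homeomorph.refl N).prodCongr α * F * ((Homeomorph.refl N).prodCongr α)⁻¹
      ∈ slabGroup N t := by
  refine ⟨fun z => ?_, fun ⟨n, τ⟩ hτ => ?_⟩
  · simp [snd_apply hF]
  · have : α.symm τ ∉ s := fun h => hτ (by simpa using hα h)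
    simp [apply_eq_self hF (z := (n, α.symm τ)) this]

end slabGroup

theorem exists_mem_slabGroup_Ioo_apply_eq {F : N × ℝ ≃ₜ N × ℝ} (hF : F ∈ slabGroup N (Ioo 0 1))
    {p q : N} (hpq : F (p, 1 / 2) = (q, 1 / 2)) {a b m : ℝ} (hm : m ∈ Ioo a b) :
    ∃ G ∈ slabGroup N (Ioo a b), G (p, m) = (q, m) := by
  set d := min (m - a) (b - m)
  have hd : 0 < d := lt_min (sub_pos.2 hm.1) (sub_pos.2 hm.2)
  set α : ℝ ≃ₜ ℝ := (Homeomorph.mulLeft₀ (2 * d) (by positivity)).trans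
    (Homeomorph.addLeft (m - d))
  have hα : ∀ t, α t = m - d + 2 * d * t := fun _ => rfl
  have hαm : α (1 / 2) = m := by rw [hα]; field_simp; ring
  refine ⟨_, slabGroup.conj_mem α (fun τ hτ => ?_) hF, ?_⟩
  · have h1 : d ≤ m - a := min_le_left _ _
    have h2 : d ≤ b - m := min_le_right _ _
    rw [hα]
    constructor <;> nlinarith [hτ.1, hτ.2]
  · have : α.symm m = 1 / 2 := by rw [α.symm_apply_eq, hαm]
    change ((Homeomorph.refl N).prodCongr α) (F (p, α.symm m)) = (q, m)
    rw [this, hpq]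
    exact congrArg (q, ·) hαm

end SlabGroup

section ConeBump

variable {X : Type*} [PseudoMetricSpace X]

def coneBump (x₀ : X) (r : ℝ) (x : X) : ℝ := max 0 (1 - dist x x₀ / r)

theorem coneBump_self (x₀ : X) (r : ℝ) : coneBump x₀ r x₀ = 1 := by
  simp [coneBump]

theorem coneBump_eq_zero {x₀ x : X} {r : ℝ} (hr : 0 < r) (hx : x ∉ ball x₀ r) :
    coneBump x₀ r x = 0 := by
  rw [mem_ball, not_lt] at hx
  have : 1 ≤ dist x x₀ / r := (one_le_div hr).2 hx
  simp only [coneBump, max_eq_left_iff]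
  linarith

theorem abs_coneBump_sub_le (x₀ : X) {r : ℝ} (hr : 0 < r) (x x' : X) :
    |coneBump x₀ r x - coneBump x₀ r x'| ≤ dist x x' / r := by
  calc |coneBump x₀ r x - coneBump x₀ r x'|
      ≤ |(1 - dist x x₀ / r) - (1 - dist x' x₀ / r)| := by
        simpa only [coneBump, max_comm (0 : ℝ)] using abs_max_sub_max_le_abs _ _ (0 : ℝ)
    _ = |dist x x₀ - dist x' x₀| / r := by
        rw [sub_sub_sub_cancel_left, ← sub_div, abs_div, abs_of_pos hr, abs_sub_comm]
    _ ≤ dist x x' / r := by gcongr; exact abs_dist_sub_le x x' x₀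

end ConeBump

section Push

variable {F : Type*} [NormedAddCommGroup F] [NormedSpace ℝ F] [CompleteSpace F]

theorem exists_homeomorph_add_of_lipschitzWith {g : F → F} {K : NNReal} (hg : LipschitzWith K g)
    (hK : K < 1) : ∃ Φ : F ≃ₜ F, ∀ x, Φ x = x + g x := by
  have happrox : ApproximatesLinearOn (fun x => x + g x)
      ((ContinuousLinearEquiv.refl ℝ F : F ≃L[ℝ] F) : F →L[ℝ] F) univ K := by
    rw [ApproximatesLinearOn.approximatesLinearOn_iff_lipschitzOnWith]
    convert hg.lipschitzOnWith (s := univ) using 1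
    ext x
    simp
  rcases subsingleton_or_nontrivial F with hF | hF
  · exact ⟨ApproximatesLinearOn.toHomeomorph _ happrox (Or.inl hF), fun _ => rfl⟩
  · refine ⟨ApproximatesLinearOn.toHomeomorph _ happrox (Or.inr ?_), fun _ => rfl⟩
    have : ‖((ContinuousLinearEquiv.refl ℝ F).symm : F →L[ℝ] F)‖₊ = 1 := by
      ext; exact ContinuousLinearMap.norm_id
    simpa [this] using hK

theorem exists_homeomorph_add_coneBump_smul (z₀ v : F) {r : ℝ} (hv : ‖v‖ < r) :
    ∃ Φ : F ≃ₜ F, ∀ z, Φ z = z + coneBump z₀ r z • v := by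
  have hr : 0 < r := (norm_nonneg v).trans_lt hv
  have hK : ((‖v‖ / r).toNNReal : ℝ) = ‖v‖ / r := Real.coe_toNNReal _ (by positivity)
  refine exists_homeomorph_add_of_lipschitzWith (K := (‖v‖ / r).toNNReal) ?_ ?_
  · refine LipschitzWith.of_dist_le_mul fun z z' => ?_
    rw [dist_eq_norm, ← sub_smul, norm_smul, Real.norm_eq_abs, hK]
    calc |coneBump z₀ r z - coneBump z₀ r z'| * ‖v‖ ≤ dist z z' / r * ‖v‖ := by
          gcongr; exact abs_coneBump_sub_le z₀ hr z z'
      _ = ‖v‖ / r * dist z z' := by ring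
  · rw [← NNReal.coe_lt_coe, hK, NNReal.coe_one]
    exact (div_lt_one hr).2 hv

theorem exists_mem_slabGroup_apply_eq_add (c w : F) {r : ℝ} (hr : r ≤ 1 / 2) (hw : ‖w‖ < r) :
    ∃ Φ ∈ slabGroup F (Ioo 0 1), Φ (c, 1 / 2) = (c + w, 1 / 2) ∧
      ∀ z ∉ ball (c, 1 / 2) r, Φ z = z := by
  have hr0 : 0 < r := (norm_nonneg w).trans_lt hw
  obtain ⟨Φ, hΦ⟩ := exists_homeomorph_add_coneBump_smul ((c, 1 / 2) : F × ℝ) (w, 0)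
    (by simpa using hw)
  have hΦK : ∀ z ∉ ball ((c, 1 / 2) : F × ℝ) r, Φ z = z := fun z hz => by
    rw [hΦ, coneBump_eq_zero hr0 hz, zero_smul, add_zero]
  refine ⟨Φ, ⟨fun z => by simp [hΦ], fun z hz => hΦK z ?_⟩, by simp [hΦ, coneBump_self], hΦK⟩
  rw [← ball_prod_same, Real.ball_eq_Ioo]
  rintro ⟨-, h1, h2⟩
  exact hz ⟨by linarith, by linarith⟩

end Push

section Extension

variable {X Y : Type*} [TopologicalSpace X] [TopologicalSpace Y]

theorem Homeomorph.mapsTo_of_forall_notMem_apply_eq (Φ : Y ≃ₜ Y) {K S : Set Y} (hKS : K ⊆ S)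
    (hΦ : ∀ y ∉ K, Φ y = y) : MapsTo Φ S S := by
  intro y hy
  by_cases hyK : y ∈ K
  · by_contra h
    have h' : Φ y ∉ K := fun h' => h (hKS h')
    rw [Φ.injective (hΦ _ h')] at h'
    exact h' hyK
  · rwa [hΦ y hyK]

namespace OpenPartialHomeomorph

variable (e : OpenPartialHomeomorph X Y)

open Classical in
def extendConj (f : Y → Y) (x : X) : X := if x ∈ e.source then e.symm (f (e x)) else x

theorem extendConj_of_mem {f : Y → Y} {x : X} (hx : x ∈ e.source) :
    e.extendConj f x = e.symm (f (e x)) := if_pos hx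

theorem extendConj_of_notMem {f : Y → Y} {x : X} (hx : x ∉ e.source) : e.extendConj f x = x :=
  if_neg hx

theorem extendConj_extendConj {f g : Y → Y} (hf : MapsTo f e.target e.target)
    (hgf : ∀ y ∈ e.target, g (f y) = y) (x : X) : e.extendConj g (e.extendConj f x) = x := by
  by_cases hx : x ∈ e.source
  · have hfx : f (e x) ∈ e.target := hf (e.map_source hx)
    rw [e.extendConj_of_mem hx, e.extendConj_of_mem (e.map_target hfx), e.right_inv hfx,
      hgf _ (e.map_source hx), e.left_inv hx]
  · rw [e.extendConj_of_notMem hx, e.extendConj_of_notMem hx]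

theorem continuous_extendConj [T2Space X] {f : Y → Y} (hf : Continuous f)
    (hf_maps : MapsTo f e.target e.target) {K : Set Y} (hK : IsCompact K) (hKe : K ⊆ e.target)
    (hf_fix : ∀ y ∉ K, f y = y) : Continuous (e.extendConj f) := by
  refine continuous_iff_continuousAt.2 fun x => ?_
  by_cases hx : x ∈ e.source
  · have h : ContinuousAt (e.symm ∘ f ∘ e) x :=
      (e.continuousAt_symm (hf_maps (e.map_source hx))).comp (f := f ∘ e)
        (hf.continuousAt.comp (e.continuousAt hx))
    exact h.congr (eventually_of_mem (e.open_source.mem_nhds hx)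
      fun x' hx' => (e.extendConj_of_mem hx').symm)
  · have hKc : IsClosed (e.symm '' K) :=
      (hK.image_of_continuousOn (e.continuousOn_symm.mono hKe)).isClosed
    have hxK : x ∉ e.symm '' K := fun ⟨y, hy, hyx⟩ => hx (hyx ▸ e.map_target (hKe hy))
    refine continuousAt_id.congr (eventually_of_mem (hKc.isOpen_compl.mem_nhds hxK)
      fun x' hx' => ?_)
    by_cases hx's : x' ∈ e.source
    · have : e x' ∉ K := fun h => hx' ⟨e x', h, e.left_inv hx's⟩
      rw [id, e.extendConj_of_mem hx's, hf_fix _ this, e.left_inv hx's]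
    · exact (e.extendConj_of_notMem hx's).symm

theorem exists_homeomorph_extendConj [T2Space X] (Φ : Y ≃ₜ Y) {K : Set Y} (hK : IsCompact K)
    (hKe : K ⊆ e.target) (hΦ : ∀ y ∉ K, Φ y = y) : ∃ Ψ : X ≃ₜ X, ⇑Ψ = e.extendConj Φ := by
  have hΦ' : ∀ y ∉ K, Φ.symm y = y := fun y hy => Φ.symm_apply_eq.2 (hΦ y hy).symm
  have hmaps := Φ.mapsTo_of_forall_notMem_apply_eq hKe hΦ
  have hmaps' := Φ.symm.mapsTo_of_forall_notMem_apply_eq hKe hΦ'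
  exact ⟨⟨⟨e.extendConj Φ, e.extendConj Φ.symm,
      e.extendConj_extendConj hmaps fun y _ => Φ.symm_apply_apply y,
      e.extendConj_extendConj hmaps' fun y _ => Φ.apply_symm_apply y⟩,
    e.continuous_extendConj Φ.continuous hmaps hK hKe hΦ,
    e.continuous_extendConj Φ.symm.continuous hmaps' hK hKe hΦ'⟩, rfl⟩

end OpenPartialHomeomorph

end Extension


section Glue

variable {N : Type*} [TopologicalSpace N] {ι : Type*} {s : ι → Set ℝ}
  {F : ι → N × ℝ ≃ₜ N × ℝ}

open Classical in
def glueSlabs (s : ι → Set ℝ) (F : ι → N × ℝ ≃ₜ N × ℝ) (z : N × ℝ) : N × ℝ :=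
  if h : ∃ i, z.2 ∈ s i then F h.choose z else z

theorem glueSlabs_of_mem (hs : Pairwise (Disjoint on s)) {i : ι} {z : N × ℝ} (hz : z.2 ∈ s i) :
    glueSlabs s F z = F i z := by
  have h : ∃ i, z.2 ∈ s i := ⟨i, hz⟩
  have : h.choose = i := hs.eq (not_disjoint_iff.2 ⟨z.2, h.choose_spec, hz⟩)
  rw [glueSlabs, dif_pos h, this]

theorem glueSlabs_of_forall_notMem {z : N × ℝ} (hz : ∀ i, z.2 ∉ s i) : glueSlabs s F z = z := by
  rw [glueSlabs, dif_neg (not_exists.2 hz)]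

theorem glueSlabs_of_mem_closure (hs_open : ∀ i, IsOpen (s i)) (hs : Pairwise (Disjoint on s))
    (hF : ∀ i, F i ∈ slabGroup N (s i)) {i : ι} {z : N × ℝ} (hz : z.2 ∈ closure (s i)) :
    glueSlabs s F z = F i z := by
  by_cases hzi : z.2 ∈ s i
  · exact glueSlabs_of_mem hs hzi
  rw [slabGroup.apply_eq_self (hF i) hzi]
  refine glueSlabs_of_forall_notMem fun j hzj => ?_
  have hji : j ≠ i := by rintro rfl; exact hzi hzj
  exact ((hs hji).closure_right (hs_open j)).notMem_of_mem_left hzj hz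

theorem continuous_glueSlabs (hs_open : ∀ i, IsOpen (s i)) (hs : Pairwise (Disjoint on s))
    (hs_lf : LocallyFinite s) (hF : ∀ i, F i ∈ slabGroup N (s i)) :
    Continuous (glueSlabs s F) := by
  set C : Option ι → Set (N × ℝ) :=
    Option.elim' (Prod.snd ⁻¹' (⋃ i, s i)ᶜ) fun i => Prod.snd ⁻¹' closure (s i)
  refine LocallyFinite.continuous (f := C)
    ((hs_lf.closure.preimage_continuous continuous_snd).option_elim' _) ?_ ?_ ?_
  · refine eq_univ_of_forall fun z => ?_
    by_cases hz : ∃ i, z.2 ∈ s i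
    · obtain ⟨i, hi⟩ := hz
      exact mem_iUnion.2 ⟨some i, subset_closure hi⟩
    · exact mem_iUnion.2 ⟨none, show z.2 ∈ (⋃ i, s i)ᶜ by simpa using hz⟩
  · rintro (_ | i)
    · exact ((isOpen_iUnion hs_open).isClosed_compl).preimage continuous_snd
    · exact isClosed_closure.preimage continuous_snd
  · rintro (_ | i)
    · exact continuousOn_id.congr fun z (hz : z.2 ∈ (⋃ i, s i)ᶜ) =>
        glueSlabs_of_forall_notMem fun i hi => hz (mem_iUnion.2 ⟨i, hi⟩)
    · exact (F i).continuous.continuousOn.congr fun z hz =>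
        glueSlabs_of_mem_closure hs_open hs hF hz

theorem glueSlabs_inv_glueSlabs (hs : Pairwise (Disjoint on s))
    (hF : ∀ i, F i ∈ slabGroup N (s i)) (z : N × ℝ) :
    glueSlabs s (fun i => (F i)⁻¹) (glueSlabs s F z) = z := by
  by_cases hz : ∃ i, z.2 ∈ s i
  · obtain ⟨i, hi⟩ := hz
    rw [glueSlabs_of_mem hs hi, glueSlabs_of_mem hs (by rwa [slabGroup.snd_apply (hF i)]),
      Homeomorph.inv_apply, Homeomorph.symm_apply_apply]
  · rw [not_exists] at hz
    rw [glueSlabs_of_forall_notMem hz, glueSlabs_of_forall_notMem hz]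

theorem exists_mem_slabGroup_iUnion (hs_open : ∀ i, IsOpen (s i)) (hs : Pairwise (Disjoint on s))
    (hs_lf : LocallyFinite s) (hF : ∀ i, F i ∈ slabGroup N (s i)) :
    ∃ G ∈ slabGroup N (⋃ i, s i), ∀ i z, z.2 ∈ s i → G z = F i z := by
  have hF' : ∀ i, (F i)⁻¹ ∈ slabGroup N (s i) := fun i => inv_mem (hF i)
  refine ⟨⟨⟨glueSlabs s F, glueSlabs s fun i => (F i)⁻¹, glueSlabs_inv_glueSlabs hs hF,
      fun z => by simpa using glueSlabs_inv_glueSlabs hs hF' z⟩,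
    continuous_glueSlabs hs_open hs hs_lf hF, continuous_glueSlabs hs_open hs hs_lf hF'⟩,
    ⟨fun z => ?_, fun z hz => ?_⟩, fun i z hz => glueSlabs_of_mem hs hz⟩
  · by_cases hz : ∃ i, z.2 ∈ s i
    · obtain ⟨i, hi⟩ := hz
      exact (congrArg Prod.snd (glueSlabs_of_mem hs hi)).trans (slabGroup.snd_apply (hF i) z)
    · exact congrArg Prod.snd (glueSlabs_of_forall_notMem (not_exists.1 hz))
  · exact glueSlabs_of_forall_notMem fun i hi => hz (mem_iUnion.2 ⟨i, hi⟩)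

end Glue

section Homogeneity

theorem OpenPartialHomeomorph.mem_slabGroup_of_coe_eq_extendConj {E N : Type*}
    [TopologicalSpace E] [TopologicalSpace N] (φ : OpenPartialHomeomorph N E) {s : Set ℝ}
    {Φ : E × ℝ ≃ₜ E × ℝ} (hΦ : Φ ∈ slabGroup E s) {Ψ : N × ℝ ≃ₜ N × ℝ}
    (hΨ : ⇑Ψ = (φ.prod (OpenPartialHomeomorph.refl ℝ)).extendConj Φ) : Ψ ∈ slabGroup N s := by
  set e := φ.prod (OpenPartialHomeomorph.refl ℝ)
  refine ⟨fun z => ?_, fun z hz => ?_⟩ <;> by_cases hze : z ∈ e.source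
  · rw [hΨ, e.extendConj_of_mem hze]
    exact slabGroup.snd_apply hΦ (e z)
  · rw [hΨ, e.extendConj_of_notMem hze]
  · rw [hΨ, e.extendConj_of_mem hze, slabGroup.apply_eq_self hΦ hz, e.left_inv hze]
  · rw [hΨ, e.extendConj_of_notMem hze]

theorem eventually_exists_mem_slabGroup_apply_eq (E : Type*) [NormedAddCommGroup E]
    [NormedSpace ℝ E] [ProperSpace E] {N : Type*} [TopologicalSpace N] [T2Space N]
    [ChartedSpace E N] (q : N) :
    ∀ᶠ p in 𝓝 q, ∃ F ∈ slabGroup N (Ioo 0 1), F (p, 1 / 2) = (q, 1 / 2) := by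
  set φ := chartAt E q
  set e := φ.prod (OpenPartialHomeomorph.refl ℝ)
  obtain ⟨ρ, hρ, hρφ⟩ : ∃ ρ > 0, closedBall (φ q) ρ ⊆ φ.target :=
    nhds_basis_closedBall.mem_iff.1 (φ.open_target.mem_nhds (mem_chart_target E q))
  set r := min (ρ / 2) (1 / 2)
  have hr : 0 < r := by positivity
  filter_upwards [φ.open_source.mem_nhds (mem_chart_source E q),
    (φ.continuousAt (mem_chart_source E q)).preimage_mem_nhds (ball_mem_nhds (φ q) hr)]
    with p hp (hpq : dist (φ p) (φ q) < r)
  obtain ⟨Φ, hΦ, hΦp, hΦK⟩ := exists_mem_slabGroup_apply_eq_add (φ p) (φ q - φ p)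
    (min_le_right _ _) (by rwa [← dist_eq_norm, dist_comm])
  have hKe : closedBall ((φ p, 1 / 2) : E × ℝ) r ⊆ e.target := fun z hz => by
    rw [← closedBall_prod_same, mem_prod, mem_closedBall] at hz
    refine ⟨hρφ ?_, mem_univ _⟩
    rw [mem_closedBall]
    linarith [dist_triangle z.1 (φ p) (φ q), min_le_left (ρ / 2) (1 / 2)]
  obtain ⟨Ψ, hΨ⟩ := e.exists_homeomorph_extendConj Φ (isCompact_closedBall _ _) hKe
    fun z hz => hΦK z fun h => hz (ball_subset_closedBall h)
  refine ⟨Ψ, φ.mem_slabGroup_of_coe_eq_extendConj hΦ hΨ, ?_⟩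
  rw [hΨ, e.extendConj_of_mem (show (p, (1 : ℝ) / 2) ∈ e.source from ⟨hp, mem_univ _⟩)]
  change (φ.symm (Φ (φ p, 1 / 2)).1, (Φ (φ p, 1 / 2)).2) = (q, 1 / 2)
  rw [hΦp, add_sub_cancel, φ.left_inv (mem_chart_source E q)]

theorem exists_mem_slabGroup_apply_eq (E : Type*) [NormedAddCommGroup E] [NormedSpace ℝ E]
    [ProperSpace E] {N : Type*} [TopologicalSpace N] [T2Space N] [PreconnectedSpace N]
    [ChartedSpace E N] (p q : N) :
    ∃ F ∈ slabGroup N (Ioo 0 1), F (p, 1 / 2) = (q, 1 / 2) := by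
  refine PreconnectedSpace.induction₂'
    (fun p q => ∃ F ∈ slabGroup N (Ioo 0 1), F (p, 1 / 2) = (q, 1 / 2)) (fun q => ?_) ⟨?_⟩ p q
  · filter_upwards [eventually_exists_mem_slabGroup_apply_eq E q] with p ⟨F, hF, hFp⟩
    exact ⟨⟨F⁻¹, inv_mem hF, by rw [← hFp, Homeomorph.inv_apply, F.symm_apply_apply]⟩, F, hF, hFp⟩
  · rintro a b c ⟨F, hF, hab⟩ ⟨G, hG, hbc⟩
    exact ⟨G * F, mul_mem hG hF, by rw [Homeomorph.mul_apply, hab, hbc]⟩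

end Homogeneity

section Interpolation

variable {A B : ℕ → ℝ} {n : ℕ} {t : ℝ}

-- The piece `n` containing `t`, i.e. `A n ≤ t < A (n + 1)`; piece `0` extends down to `-∞`.
def pieceIndex (A : ℕ → ℝ) (t : ℝ) : ℕ := sInf {n | t < A (n + 1)}

theorem pieceIndex_eq (hA : StrictMono A) (hn : n = 0 ∨ A n ≤ t) (ht : t < A (n + 1)) :
    pieceIndex A t = n := by
  refine le_antisymm (Nat.sInf_le ht) (le_csInf ⟨n, ht⟩ fun m (hm : t < A (m + 1)) => ?_)
  by_contra! hmn
  rcases hn with rfl | hn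
  · exact Nat.not_lt_zero m hmn
  · exact hm.not_ge ((hA.monotone hmn).trans hn)

theorem pieceIndex_spec (hA_top : Tendsto A atTop atTop) (t : ℝ) :
    (pieceIndex A t = 0 ∨ A (pieceIndex A t) ≤ t) ∧ t < A (pieceIndex A t + 1) := by
  obtain ⟨n, hn⟩ := ((tendsto_add_atTop_iff_nat 1).2 hA_top).eventually_gt_atTop t |>.exists
  refine ⟨?_, Nat.sInf_mem (s := {n | t < A (n + 1)}) ⟨n, hn⟩⟩
  rcases Nat.eq_zero_or_pos (pieceIndex A t) with h | h
  · exact Or.inl h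
  · have : pieceIndex A t - 1 ∉ {n | t < A (n + 1)} := Nat.notMem_of_lt_sInf (Nat.sub_one_lt h.ne')
    rw [mem_ofPred_eq, not_lt, Nat.sub_add_cancel h] at this
    exact Or.inr this

def pieceSlope (A B : ℕ → ℝ) (n : ℕ) : ℝ := (B (n + 1) - B n) / (A (n + 1) - A n)

theorem pieceSlope_pos (hA : StrictMono A) (hB : StrictMono B) (n : ℕ) : 0 < pieceSlope A B n :=
  div_pos (sub_pos.2 (hB n.lt_succ_self)) (sub_pos.2 (hA n.lt_succ_self))

theorem pieceSlope_mul_pieceSlope (hA : StrictMono A) (hB : StrictMono B) (n : ℕ) :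
    pieceSlope A B n * pieceSlope B A n = 1 := by
  have hA' := sub_pos.2 (hA n.lt_succ_self)
  have hB' := sub_pos.2 (hB n.lt_succ_self)
  rw [pieceSlope, pieceSlope, div_mul_div_comm, mul_comm, div_self (by positivity)]

theorem mapsTo_piece (hA : StrictMono A) (hB : StrictMono B) (hn : n = 0 ∨ A n ≤ t)
    (ht : t < A (n + 1)) :
    (n = 0 ∨ B n ≤ B n + pieceSlope A B n * (t - A n)) ∧
      B n + pieceSlope A B n * (t - A n) < B (n + 1) := by
  have hs := pieceSlope_pos hA hB n
  have hA' := sub_pos.2 (hA n.lt_succ_self)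
  refine ⟨hn.imp_right fun h => ?_, ?_⟩
  · nlinarith
  · have : pieceSlope A B n * (A (n + 1) - A n) = B (n + 1) - B n := div_mul_cancel₀ _ hA'.ne'
    nlinarith

def plInterp (A B : ℕ → ℝ) (t : ℝ) : ℝ :=
  B (pieceIndex A t) + pieceSlope A B (pieceIndex A t) * (t - A (pieceIndex A t))

theorem plInterp_eq (hA : StrictMono A) (hn : n = 0 ∨ A n ≤ t) (ht : t < A (n + 1)) :
    plInterp A B t = B n + pieceSlope A B n * (t - A n) := by
  rw [plInterp, pieceIndex_eq hA hn ht]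

theorem plInterp_plInterp (hA : StrictMono A) (hB : StrictMono B)
    (hA_top : Tendsto A atTop atTop) (t : ℝ) : plInterp B A (plInterp A B t) = t := by
  obtain ⟨hn, ht⟩ := pieceIndex_spec hA_top t
  obtain ⟨hn', ht'⟩ := mapsTo_piece (B := B) hA hB hn ht
  rw [plInterp_eq hA hn ht, plInterp_eq hB hn' ht', add_sub_cancel_left, ← mul_assoc,
    mul_comm (pieceSlope B A _), pieceSlope_mul_pieceSlope hA hB, one_mul, add_sub_cancel]

theorem strictMono_plInterp (hA : StrictMono A) (hB : StrictMono B)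
    (hA_top : Tendsto A atTop atTop) : StrictMono (plInterp A B) := by
  intro t t' htt'
  obtain ⟨hn, ht⟩ := pieceIndex_spec hA_top t
  obtain ⟨hn', ht'⟩ := pieceIndex_spec hA_top t'
  set n := pieceIndex A t
  set n' := pieceIndex A t'
  have hnn' : n ≤ n' := Nat.sInf_le (htt'.trans ht')
  rw [plInterp_eq hA hn ht, plInterp_eq hA hn' ht']
  rcases hnn'.eq_or_lt with h | h
  · rw [h]
    gcongr
    exact pieceSlope_pos hA hB n'
  · calc B n + pieceSlope A B n * (t - A n) < B (n + 1) := (mapsTo_piece hA hB hn ht).2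
      _ ≤ B n' := hB.monotone h
      _ ≤ B n' + pieceSlope A B n' * (t' - A n') :=
        ((mapsTo_piece hA hB hn' ht').1.resolve_left (by omega))

theorem plInterp_apply (hA : StrictMono A) (n : ℕ) : plInterp A B (A n) = B n := by
  rw [plInterp_eq hA (Or.inr le_rfl) (hA n.lt_succ_self), sub_self, mul_zero, add_zero]

theorem plInterp_of_le (hA : StrictMono A) (h0 : A 0 = B 0) (h1 : A 1 = B 1) (ht : t ≤ A 1) :
    plInterp A B t = t := by
  rcases ht.lt_or_eq with ht | rfl
  · have : pieceSlope A B 0 = 1 := by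
      rw [pieceSlope, zero_add, ← h0, ← h1, div_self (sub_pos.2 (hA zero_lt_one)).ne']
    rw [plInterp_eq hA (Or.inl rfl) ht, this, one_mul, ← h0, add_sub_cancel]
  · rw [plInterp_apply hA, h1]

def plOrderIso (hA : StrictMono A) (hB : StrictMono B) (hA_top : Tendsto A atTop atTop)
    (hB_top : Tendsto B atTop atTop) : ℝ ≃o ℝ :=
  StrictMono.orderIsoOfRightInverse (plInterp A B) (strictMono_plInterp hA hB hA_top)
    (plInterp B A) (plInterp_plInterp hB hA hB_top)

-- Two extra knots `T - 1, T` shared by both sequences make `plInterp` the identity below `T`.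
def knots (T : ℝ) (u : ℕ → ℝ) : ℕ → ℝ
  | 0 => T - 1
  | 1 => T
  | n + 2 => u n

theorem strictMono_knots {T : ℝ} {u : ℕ → ℝ} (hu : StrictMono u) (hT : T < u 0) :
    StrictMono (knots T u) :=
  strictMono_nat_of_lt_succ fun
    | 0 => sub_one_lt T
    | 1 => hT
    | n + 2 => hu n.lt_succ_self

theorem tendsto_knots {T : ℝ} {u : ℕ → ℝ} (hu : Tendsto u atTop atTop) :
    Tendsto (knots T u) atTop atTop :=
  (tendsto_add_atTop_iff_nat 2).1 hu

theorem exists_orderIso_apply_eq {u v : ℕ → ℝ} (hu : StrictMono u) (hv : StrictMono v)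
    (hu_top : Tendsto u atTop atTop) (hv_top : Tendsto v atTop atTop) {T : ℝ} (hTu : T < u 0)
    (hTv : T < v 0) : ∃ e : ℝ ≃o ℝ, (∀ i, e (u i) = v i) ∧ ∀ t ≤ T, e t = t :=
  ⟨plOrderIso (strictMono_knots hu hTu) (strictMono_knots hv hTv) (tendsto_knots hu_top)
      (tendsto_knots hv_top),
    fun i => plInterp_apply (strictMono_knots hu hTu) (i + 2),
    fun _ ht => plInterp_of_le (strictMono_knots hu hTu) rfl rfl ht⟩

end Interpolation

theorem locallyFinite_Ioo_succ {w : ℕ → ℝ} (hw : Monotone w) (hw_top : Tendsto w atTop atTop) :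
    LocallyFinite fun n => Ioo (w n) (w (n + 1)) := by
  intro t
  obtain ⟨m, hm⟩ := (hw_top.eventually_gt_atTop t).exists
  refine ⟨Iio (w m), Iio_mem_nhds hm, (finite_lt_nat m).subset fun n ⟨s, hs, hsm⟩ => ?_⟩
  exact lt_of_not_ge fun hmn => (hw hmn).not_gt (hs.1.trans hsm)

theorem exists_strictMono_interlacing {v : ℕ → ℝ} (hv : StrictMono v)
    (hv_top : Tendsto v atTop atTop) {T : ℝ} (hT : T < v 0) :
    ∃ w : ℕ → ℝ, StrictMono w ∧ Tendsto w atTop atTop ∧ T < w 0 ∧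
      ∀ i, v i ∈ Ioo (w i) (w (i + 1)) := by
  set B := knots T v
  have hB : StrictMono B := strictMono_knots hv hT
  refine ⟨fun n => (B (n + 1) + B (n + 2)) / 2, fun m n hmn => ?_, ?_, ?_, fun i => ?_⟩
  · have := hB (Nat.succ_lt_succ hmn)
    have := hB (Nat.succ_lt_succ (Nat.succ_lt_succ hmn))
    dsimp only
    linarith
  · refine tendsto_atTop_mono (fun n => ?_)
      ((tendsto_add_atTop_iff_nat 1).2 (tendsto_knots hv_top) : Tendsto (fun n => B (n + 1)) _ _)
    have := hB (n + 1).lt_succ_self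
    linarith
  · change T < (T + v 0) / 2
    linarith
  · have h1 : B (i + 1) < v i := hB (i + 1).lt_succ_self
    have h2 : v i < B (i + 3) := hB (i + 2).lt_succ_self
    change (B (i + 1) + v i) / 2 < v i ∧ v i < (v i + B (i + 3)) / 2
    constructor <;> linarith

theorem exists_homeomorph_prod_real (E : Type*) [NormedAddCommGroup E] [NormedSpace ℝ E]
    [ProperSpace E] {N : Type*} [TopologicalSpace N] [T2Space N] [PreconnectedSpace N]
    [ChartedSpace E N] {x y : ℕ → N × ℝ} (hx : StrictMono fun i => (x i).2)
    (hy : StrictMono fun i => (y i).2) (hx_top : Tendsto (fun i => (x i).2) atTop atTop)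
    (hy_top : Tendsto (fun i => (y i).2) atTop atTop) :
    ∃ H : N × ℝ ≃ₜ N × ℝ, (∀ i, H (x i) = y i) ∧ ∃ T, ∀ z : N × ℝ, z.2 ≤ T → H z = z := by
  set T := min (x 0).2 (y 0).2 - 1
  have hTx : T < (x 0).2 := by linarith [min_le_left (x 0).2 (y 0).2]
  have hTy : T < (y 0).2 := by linarith [min_le_right (x 0).2 (y 0).2]
  obtain ⟨e, hex, heT⟩ := exists_orderIso_apply_eq hx hy hx_top hy_top hTx hTy
  obtain ⟨w, hw, hw_top, hTw, hyw⟩ := exists_strictMono_interlacing hy hy_top hTy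
  choose F hF hFx using fun i =>
    have ⟨F, hF, hFpq⟩ := exists_mem_slabGroup_apply_eq E (x i).1 (y i).1
    exists_mem_slabGroup_Ioo_apply_eq hF hFpq (hyw i)
  obtain ⟨G, hG, hGF⟩ := exists_mem_slabGroup_iUnion (fun _ => isOpen_Ioo)
    (by simpa using hw.monotone.pairwise_disjoint_on_Ioo_succ)
    (locallyFinite_Ioo_succ hw.monotone hw_top) hF
  refine ⟨((Homeomorph.refl N).prodCongr e.toHomeomorph).trans G, fun i => ?_, T, fun z hz => ?_⟩
  · change G ((x i).1, e (x i).2) = y i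
    rw [hex, hGF i ((x i).1, (y i).2) (hyw i), hFx]
  · change G (z.1, e z.2) = z
    rw [heT _ hz]
    refine slabGroup.apply_eq_self hG fun h => ?_
    obtain ⟨n, hn⟩ := mem_iUnion.1 h
    linarith [hn.1, hw.monotone n.zero_le]

end

theorem tube_homeomorphism_general (k : ℕ)
    (N : Type*) [TopologicalSpace N] [T2Space N] [ConnectedSpace N]
    [ChartedSpace (EuclideanSpace ℝ (Fin k)) N]
    (x y : ℕ → N × ↥(Set.Ioi (0 : ℝ)))
    (hx_mono : StrictMono fun i => ((x i).2 : ℝ))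
    (hy_mono : StrictMono fun i => ((y i).2 : ℝ))
    (hx_top : Tendsto (fun i => ((x i).2 : ℝ)) atTop atTop)
    (hy_top : Tendsto (fun i => ((y i).2 : ℝ)) atTop atTop) :
    ∃ g : (N × ↥(Set.Ioi (0 : ℝ))) ≃ₜ (N × ↥(Set.Ioi (0 : ℝ))),
      (∀ i, g (x i) = y i) ∧
      ∃ ε > (0 : ℝ), ∀ p : N × ↥(Set.Ioi (0 : ℝ)), ((p.2 : ℝ) ≤ ε → g p = p) := by
  set expIso := Real.expOrderIso
  set Θ : N × ℝ ≃ₜ N × Ioi (0 : ℝ) := (Homeomorph.refl N).prodCongr expIso.toHomeomorph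
  have hlog_mono : ∀ z : ℕ → N × Ioi (0 : ℝ), StrictMono (fun i => ((z i).2 : ℝ)) →
      StrictMono fun i => (Θ.symm (z i)).2 := fun z hz =>
    expIso.symm.strictMono.comp fun _ _ hij => hz hij
  have hlog_top : ∀ z : ℕ → N × Ioi (0 : ℝ), Tendsto (fun i => ((z i).2 : ℝ)) atTop atTop →
      Tendsto (fun i => (Θ.symm (z i)).2) atTop atTop := fun z hz =>
    expIso.symm.tendsto_atTop.comp (tendsto_Ioi_atTop.2 hz)
  obtain ⟨H, hH, T, hT⟩ := exists_homeomorph_prod_real (EuclideanSpace ℝ (Fin k))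
    (hlog_mono x hx_mono) (hlog_mono y hy_mono) (hlog_top x hx_top) (hlog_top y hy_top)
  refine ⟨Θ.symm.trans (H.trans Θ), fun i => ?_, expIso T, (expIso T).2, fun p hp => ?_⟩
  · simp [hH]
  · have : (Θ.symm p).2 ≤ T := expIso.symm_apply_le.2 hp
    simp [hT _ this]

/-- Let `N` be a connected topological `k`-manifold without boundary,
`k ≥ 1`, and let `(x_i)`, `(y_i)` be sequences in `N × (0,∞)` whose second coordinates
are strictly increasing and tend to `∞`.  Then there is a homeomorphism `g` of
`N × (0,∞)` with `g(x_i) = y_i` for all `i`, restricting to the identity on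
`N × (0, ε]` for some `ε > 0`. -/
theorem tube_homeomorphism (k : ℕ) (hk : 1 ≤ k)
    (N : Type*) [TopologicalSpace N] [T2Space N] [ConnectedSpace N]
    [ChartedSpace (EuclideanSpace ℝ (Fin k)) N]
    (x y : ℕ → N × ↥(Set.Ioi (0 : ℝ)))
    (hx_mono : StrictMono fun i => ((x i).2 : ℝ))
    (hy_mono : StrictMono fun i => ((y i).2 : ℝ))
    (hx_top : Tendsto (fun i => ((x i).2 : ℝ)) atTop atTop)
    (hy_top : Tendsto (fun i => ((y i).2 : ℝ)) atTop atTop) :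
    ∃ g : (N × ↥(Set.Ioi (0 : ℝ))) ≃ₜ (N × ↥(Set.Ioi (0 : ℝ))),
      (∀ i, g (x i) = y i) ∧
      ∃ ε > (0 : ℝ), ∀ p : N × ↥(Set.Ioi (0 : ℝ)), ((p.2 : ℝ) ≤ ε → g p = p) :=
  tube_homeomorphism_general k N x y hx_mono hy_mono hx_top hy_top
end

section
/- Let q : (V^n, Σ) → (M^n, {p}) be a topological blowup of an n-manifold M at a point p (V an n-manifold, Σ = q⁻¹({p}) compact connected nonempty, q a homeomorphism from V \ Σ to M \ {p}) with n ≥ 2, and suppose at least two distinct points lie on the frontier of Σ in V. Then there exists a homeomorphism h of (M, {p}) that admits no continuous lift through q, i.e. no continuous h̃ : V → V with q ∘ h̃ = h ∘ q. -/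
/-!
Take sequences `xₘ → a` and `x'ₘ → b` in `V \ Σ` whose images `q xₘ`, `q x'ₘ` lie in a chart
around `p`. In the chart, choose radii shrinking to `p` so that infinitely many pairs
`(q xₘ, q x'ₘ)` lie in pairwise disjoint annuli, one pair per annulus. Since `n ≥ 2` an annulus is
connected, so a homeomorphism supported in it moves `q xₘ` to `q x'ₘ`. Gluing these moves on
every other annulus gives a homeomorphism `h` of `(M, p)` that fixes `q xₘ` for infinitely many
`m` and sends `q xₘ` to `q x'ₘ` for infinitely many `m`. As `q` is injective off `Σ`, a continuous
lift `f` of `h` does the same to `xₘ`, so `f a` is the limit of both subsequences: `a = f a = b`.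
-/

/-- A topological blowup of an `n`-manifold `M` at a point `p`: a quotient map
`q : V → M` from an `n`-manifold `V` such that `Σ = q⁻¹({p})` is nonempty, compact and
connected, and `q` restricts to a homeomorphism `V \ Σ → M \ {p}`. -/
structure TopBlowup (n : ℕ) (V M : Type*) [TopologicalSpace V] [TopologicalSpace M]
    [T2Space V] [T2Space M]
    [ChartedSpace (EuclideanSpace ℝ (Fin n)) V]
    [ChartedSpace (EuclideanSpace ℝ (Fin n)) M] (p : M) where
  q : V → M
  quotientMap : Topology.IsQuotientMap q
  compact_fiber : IsCompact (q ⁻¹' {p})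
  connected_fiber : IsConnected (q ⁻¹' {p})
  homeo_off : IsHomeomorph
    (Set.MapsTo.restrict q ((q ⁻¹' {p})ᶜ) ({p}ᶜ) (fun _ hv => hv))

open Set Metric Filter Topology

theorem ChartedSpace.firstCountableTopology (H : Type*) {M : Type*} [TopologicalSpace H]
    [FirstCountableTopology H] [TopologicalSpace M] [ChartedSpace H M] :
    FirstCountableTopology M :=
  ⟨fun x => by rw [← (chartAt H x).symm_map_nhds_eq (mem_chart_source H x)]; infer_instance⟩

theorem Function.Injective.mapsTo_of_forall_notMem_eq {X : Type*} {T : X → X} {K t : Set X}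
    (hT : Function.Injective T) (hK : ∀ x ∉ K, T x = x) (hKt : K ⊆ t) : MapsTo T t t := by
  intro x hx
  by_cases hxK : x ∈ K
  · by_contra hTx
    have hTK : T x ∉ K := fun h => hTx (hKt h)
    exact hTK (by rwa [hT (hK _ hTK)])
  · rwa [hK x hxK]

theorem tendsto_atTop_of_tendsto_comp_of_forall_ne {X ι : Type*} [TopologicalSpace X]
    [T1Space X] {u : ℕ → X} {c : X} {k : ι → ℕ} {l : Filter ι} (h : Tendsto (u ∘ k) l (𝓝 c))
    (hu : ∀ m, u m ≠ c) : Tendsto k l atTop := by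
  refine tendsto_atTop.2 fun N => ?_
  have : (u '' Iio N)ᶜ ∈ 𝓝 c :=
    ((finite_Iio N).image u).isClosed.isOpen_compl.mem_nhds fun ⟨m, _, hm⟩ => hu m hm
  filter_upwards [h this] with i hi
  exact not_lt.1 fun hiN => hi ⟨k i, hiN, rfl⟩

theorem exists_seq_tendsto_of_mem_frontier_preimage {X Y : Type*} [TopologicalSpace X]
    [FrechetUrysohnSpace X] [TopologicalSpace Y] [T1Space Y] {f : X → Y} (hf : Continuous f)
    {p : Y} {U : Set Y} (hU : IsOpen U) (hpU : p ∈ U) {w : X} (hw : w ∈ frontier (f ⁻¹' {p})) :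
    ∃ x : ℕ → X, (∀ m, f (x m) ∈ U \ {p}) ∧ Tendsto x atTop (𝓝 w) ∧
      Tendsto (f ∘ x) atTop (𝓝 p) := by
  have hfw : f w = p := (isClosed_singleton.preimage hf).frontier_subset hw
  have hw' : w ∈ closure (f ⁻¹' {p})ᶜ := (frontier_eq_closure_inter_closure.subset hw).2
  have : w ∈ closure (f ⁻¹' (U \ {p})) :=
    (hU.preimage hf).inter_closure ⟨show f w ∈ U from hfw ▸ hpU, hw'⟩
  obtain ⟨x, hx, hxw⟩ := mem_closure_iff_seq_limit.1 this
  exact ⟨x, hx, hxw, hfw ▸ (hf.tendsto w).comp hxw⟩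

section Homogeneity

variable {E : Type*} [NormedAddCommGroup E] [NormedSpace ℝ E] [CompleteSpace E]

/-- The map `x ↦ x + max (1 - dist x c / r) 0 • (y - c)` is the identity plus a map with
Lipschitz constant `‖y - c‖ / r < 1`, hence a homeomorphism. -/
theorem exists_homeomorph_apply_center_eq {c y : E} {r : ℝ} (hy : y ∈ ball c r) :
    ∃ T : E ≃ₜ E, T c = y ∧ ∀ x ∉ ball c r, T x = x := by
  have hr : 0 < r := pos_of_mem_ball hy
  set bump : E → ℝ := fun x => max (1 - dist x c / r) 0
  have hbump : ∀ x x', |bump x - bump x'| ≤ dist x x' / r := fun x x' =>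
    calc |bump x - bump x'| ≤ |(1 - dist x c / r) - (1 - dist x' c / r)| :=
          abs_max_sub_max_le_abs _ _ _
      _ = |dist x c - dist x' c| / r := by
          rw [sub_sub_sub_cancel_left, div_sub_div_same, abs_div, abs_of_pos hr, abs_sub_comm]
      _ ≤ dist x x' / r := by gcongr; exact abs_dist_sub_le _ _ _
  set f : E → E := fun x => x + bump x • (y - c)
  set C : NNReal := ⟨‖y - c‖ / r, by positivity⟩
  have happrox : ApproximatesLinearOn f
      ((ContinuousLinearEquiv.refl ℝ E : E ≃L[ℝ] E) : E →L[ℝ] E) univ C := by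
    intro x _ x' _
    calc ‖f x - f x' - (x - x')‖ = |bump x - bump x'| * ‖y - c‖ := by
          rw [← Real.norm_eq_abs, ← norm_smul, sub_smul]; congr 1; simp only [f]; abel
      _ ≤ dist x x' / r * ‖y - c‖ := by gcongr; exact hbump x x'
      _ = ‖y - c‖ / r * ‖x - x'‖ := by rw [dist_eq_norm]; ring
  have hC : Subsingleton E ∨ C < ‖(((ContinuousLinearEquiv.refl ℝ E).symm :
      E ≃L[ℝ] E) : E →L[ℝ] E)‖₊⁻¹ := by
    rcases subsingleton_or_nontrivial E with hE | hE
    · exact .inl hE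
    · refine .inr ?_
      rw [← NNReal.coe_lt_coe]
      change ‖y - c‖ / r < _
      simpa [div_lt_one hr, ← dist_eq_norm] using hy
  refine ⟨happrox.toHomeomorph f hC, show f c = y by simp [f, bump], fun x hx => ?_⟩
  have : 1 ≤ dist x c / r := by rwa [le_div_iff₀ hr, one_mul, ← not_lt]
  show f x = x
  simp [f, bump, this]

theorem IsOpen.exists_homeomorph_apply_eq {U : Set E} (hU : IsOpen U) (hU' : IsPreconnected U)
    {x y : E} (hx : x ∈ U) (hy : y ∈ U) :
    ∃ T : E ≃ₜ E, T x = y ∧ ∀ z ∉ U, T z = z := by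
  refine hU'.induction₂ (fun x y => ∃ T : E ≃ₜ E, T x = y ∧ ∀ z ∉ U, T z = z) ?_ ?_ ?_ hx hy
  · intro x hx
    obtain ⟨r, hr, hrU⟩ := Metric.isOpen_iff.1 hU x hx
    filter_upwards [nhdsWithin_le_nhds (ball_mem_nhds x hr)] with y hy
    obtain ⟨T, hTx, hT⟩ := exists_homeomorph_apply_center_eq hy
    exact ⟨T, hTx, fun z hz => hT z fun h => hz (hrU h)⟩
  · rintro x y z - - - ⟨T, hTx, hT⟩ ⟨T', hTy, hT'⟩
    exact ⟨T.trans T', by simp [hTx, hTy], fun w hw => by simp [hT w hw, hT' w hw]⟩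
  · rintro x y - - ⟨T, hTx, hT⟩
    exact ⟨T.symm, T.symm_apply_eq.2 hTx.symm, fun z hz => T.symm_apply_eq.2 (hT z hz).symm⟩

end Homogeneity

section Annulus

variable {X : Type*} [PseudoMetricSpace X]

def annulus (c : X) (r R : ℝ) : Set X := {x | r < dist x c ∧ dist x c < R}

theorem isOpen_annulus (c : X) (r R : ℝ) : IsOpen (annulus c r R) :=
  (isOpen_lt continuous_const (continuous_id.dist continuous_const)).inter
    (isOpen_lt (continuous_id.dist continuous_const) continuous_const)

theorem annulus_subset_ball (c : X) (r R : ℝ) : annulus c r R ⊆ ball c R := fun _ hx => hx.2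

theorem center_notMem_annulus (c : X) {r : ℝ} (hr : 0 ≤ r) (R : ℝ) : c ∉ annulus c r R :=
  fun h => (h.1.trans_eq (dist_self c)).not_ge hr

theorem isPreconnected_annulus {E : Type*} [NormedAddCommGroup E] [NormedSpace ℝ E]
    (hE : 1 < Module.rank ℝ E) (c : E) {r : ℝ} (hr : 0 ≤ r) (R : ℝ) :
    IsPreconnected (annulus c r R) := by
  have : annulus c r R = (fun p : ℝ × E => c + p.1 • p.2) '' (Ioo r R ×ˢ sphere 0 1) := by
    ext x
    constructor
    · rintro ⟨h₁, h₂⟩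
      have hx : dist x c ≠ 0 := (hr.trans_lt h₁).ne'
      refine ⟨(dist x c, (dist x c)⁻¹ • (x - c)), ⟨⟨h₁, h₂⟩, ?_⟩, ?_⟩
      · simp [norm_smul, ← dist_eq_norm, hx]
      · simp [smul_smul, hx]
    · rintro ⟨⟨t, z⟩, ⟨⟨h₁, h₂⟩, hz⟩, rfl⟩
      have ht : dist (c + t • z) c = t := by
        simp_all [dist_eq_norm, norm_smul, abs_of_pos (hr.trans_lt h₁)]
      exact ⟨ht.symm ▸ h₁, ht.symm ▸ h₂⟩
  rw [this]
  exact (isPreconnected_Ioo.prod (isPreconnected_sphere hE 0 1)).image _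
    (by fun_prop : Continuous fun p : ℝ × E => c + p.1 • p.2).continuousOn

variable {c : X} {s : ℕ → ℝ}

theorem StrictAnti.le_of_mem_annulus (hs : StrictAnti s) {x : X} {i j : ℕ}
    (hx : x ∈ annulus c (s (j + 1)) (s j)) (hi : dist x c < s i) : i ≤ j :=
  Nat.lt_succ_iff.1 (hs.lt_iff_gt.1 (hx.1.trans hi))

theorem StrictAnti.lt_of_mem_annulus (hs : StrictAnti s) {x : X} {i j : ℕ}
    (hx : x ∈ annulus c (s (j + 1)) (s j)) (hi : s i < dist x c) : j < i :=
  hs.lt_iff_gt.1 (hi.trans hx.2)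

theorem StrictAnti.eq_of_mem_annulus (hs : StrictAnti s) {x : X} {i j : ℕ}
    (hi : x ∈ annulus c (s (i + 1)) (s i)) (hj : x ∈ annulus c (s (j + 1)) (s j)) : i = j :=
  le_antisymm (hs.le_of_mem_annulus hj hi.2) (hs.le_of_mem_annulus hi hj.2)

end Annulus

section Gluing

variable {X : Type*} [MetricSpace X] {c : X} {s : ℕ → ℝ}

open Classical in
noncomputable def glueAnnuli (c : X) (s : ℕ → ℝ) (H : ℕ → X → X) (x : X) : X :=
  if h : ∃ j, x ∈ annulus c (s (j + 1)) (s j) then H h.choose x else x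

theorem glueAnnuli_apply_of_mem (hs : StrictAnti s) (H : ℕ → X → X) {x : X} {j : ℕ}
    (hx : x ∈ annulus c (s (j + 1)) (s j)) : glueAnnuli c s H x = H j x := by
  have h : ∃ j, x ∈ annulus c (s (j + 1)) (s j) := ⟨j, hx⟩
  rw [glueAnnuli, dif_pos h, hs.eq_of_mem_annulus h.choose_spec hx]

theorem glueAnnuli_apply_of_forall_notMem (H : ℕ → X → X) {x : X}
    (hx : ∀ j, x ∉ annulus c (s (j + 1)) (s j)) : glueAnnuli c s H x = x := by
  rw [glueAnnuli, dif_neg (not_exists.2 hx)]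

variable {H : ℕ → X ≃ₜ X}

theorem continuousAt_glueAnnuli_center (hs : StrictAnti s) (hs₀ : Tendsto s atTop (𝓝 0))
    (hH : ∀ j, ∀ x ∉ annulus c (s (j + 1)) (s j), H j x = x) :
    ContinuousAt (glueAnnuli c s (H ·)) c := by
  have hs_nonneg : ∀ j, 0 ≤ s j := hs.antitone.le_of_tendsto hs₀
  have hc : glueAnnuli c s (H ·) c = c :=
    glueAnnuli_apply_of_forall_notMem _ fun j => center_notMem_annulus c (hs_nonneg _) _
  rw [ContinuousAt, hc, Metric.tendsto_nhds_nhds]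
  intro ε hε
  obtain ⟨J, hJ⟩ := (hs₀.eventually (gt_mem_nhds hε)).exists
  refine ⟨s J, (hs_nonneg _).trans_lt (hs J.lt_succ_self), fun {y} hy => ?_⟩
  by_cases hy' : ∃ j, y ∈ annulus c (s (j + 1)) (s j)
  · obtain ⟨j, hj⟩ := hy'
    rw [glueAnnuli_apply_of_mem hs _ hj]
    calc dist (H j y) c < s j :=
          ((H j).injective.mapsTo_of_forall_notMem_eq (hH j) subset_rfl hj).2
      _ ≤ s J := hs.antitone (hs.le_of_mem_annulus hj hy)
      _ < ε := hJ
  · rw [glueAnnuli_apply_of_forall_notMem _ (not_exists.1 hy')]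
    exact hy.trans hJ

theorem continuousAt_glueAnnuli_of_mem (hs : StrictAnti s) {x : X} {j : ℕ}
    (hx : x ∈ annulus c (s (j + 1)) (s j)) : ContinuousAt (glueAnnuli c s (H ·)) x :=
  (H j).continuous.continuousAt.congr <| eventuallyEq_of_mem
    ((isOpen_annulus _ _ _).mem_nhds hx) fun _ hy => (glueAnnuli_apply_of_mem hs (H ·) hy).symm

theorem continuousAt_glueAnnuli_of_forall_notMem (hs : StrictAnti s)
    (hs₀ : Tendsto s atTop (𝓝 0)) (hH : ∀ j, ∀ x ∉ annulus c (s (j + 1)) (s j), H j x = x)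
    {x : X} (hxc : x ≠ c) (hx : ∀ j, x ∉ annulus c (s (j + 1)) (s j)) :
    ContinuousAt (glueAnnuli c s (H ·)) x := by
  rw [ContinuousAt, glueAnnuli_apply_of_forall_notMem _ hx]
  obtain ⟨J, hJ⟩ := (hs₀.eventually (gt_mem_nhds (dist_pos.2 hxc))).exists
  intro A hA
  have hHA : ∀ᶠ y in 𝓝 x, ∀ j ∈ Iio J, H j y ∈ A :=
    (eventually_all_finite (finite_Iio J)).2 fun j _ =>
      (H j).continuous.continuousAt.preimage_mem_nhds (by rwa [hH j x (hx j)])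
  have hyJ : ∀ᶠ y in 𝓝 x, s J < dist y c :=
    (isOpen_lt continuous_const (continuous_id.dist continuous_const)).mem_nhds hJ
  rw [mem_map]
  filter_upwards [hA, hHA, hyJ] with y hyA hyH hyJ
  by_cases hy : ∃ j, y ∈ annulus c (s (j + 1)) (s j)
  · obtain ⟨j, hj⟩ := hy
    rw [mem_preimage, glueAnnuli_apply_of_mem hs _ hj]
    exact hyH j (hs.lt_of_mem_annulus hj hyJ)
  · rwa [mem_preimage, glueAnnuli_apply_of_forall_notMem _ (not_exists.1 hy)]

theorem continuous_glueAnnuli (hs : StrictAnti s) (hs₀ : Tendsto s atTop (𝓝 0))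
    (hH : ∀ j, ∀ x ∉ annulus c (s (j + 1)) (s j), H j x = x) :
    Continuous (glueAnnuli c s (H ·)) := by
  refine continuous_iff_continuousAt.2 fun x => ?_
  by_cases hxc : x = c
  · subst hxc
    exact continuousAt_glueAnnuli_center hs hs₀ hH
  by_cases hx : ∃ j, x ∈ annulus c (s (j + 1)) (s j)
  · exact continuousAt_glueAnnuli_of_mem hs hx.choose_spec
  · exact continuousAt_glueAnnuli_of_forall_notMem hs hs₀ hH hxc (not_exists.1 hx)

theorem glueAnnuli_symm_apply_glueAnnuli (hs : StrictAnti s)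
    (hH : ∀ j, ∀ x ∉ annulus c (s (j + 1)) (s j), H j x = x) (x : X) :
    glueAnnuli c s (fun j => (H j).symm) (glueAnnuli c s (H ·) x) = x := by
  by_cases hx : ∃ j, x ∈ annulus c (s (j + 1)) (s j)
  · obtain ⟨j, hj⟩ := hx
    have hHj := (H j).injective.mapsTo_of_forall_notMem_eq (hH j) subset_rfl hj
    rw [glueAnnuli_apply_of_mem hs _ hj, glueAnnuli_apply_of_mem hs _ hHj,
      Homeomorph.symm_apply_apply]
  · rw [glueAnnuli_apply_of_forall_notMem _ (not_exists.1 hx),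
      glueAnnuli_apply_of_forall_notMem _ (not_exists.1 hx)]

theorem exists_homeomorph_eqOn_annuli (hs : StrictAnti s) (hs₀ : Tendsto s atTop (𝓝 0))
    (H : ℕ → X ≃ₜ X) (hH : ∀ j, ∀ x ∉ annulus c (s (j + 1)) (s j), H j x = x) :
    ∃ G : X ≃ₜ X, (∀ j, ∀ x ∈ annulus c (s (j + 1)) (s j), G x = H j x) ∧
      ∀ x, (∀ j, x ∉ annulus c (s (j + 1)) (s j)) → G x = x := by
  have hH' : ∀ j, ∀ x ∉ annulus c (s (j + 1)) (s j), (H j).symm x = x :=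
    fun j x hx => (H j).symm_apply_eq.2 (hH j x hx).symm
  refine ⟨⟨⟨glueAnnuli c s (H ·), glueAnnuli c s (fun j => (H j).symm),
      glueAnnuli_symm_apply_glueAnnuli hs hH,
      glueAnnuli_symm_apply_glueAnnuli (H := fun j => (H j).symm) hs hH'⟩,
    continuous_glueAnnuli hs hs₀ hH, continuous_glueAnnuli hs hs₀ hH'⟩,
    fun j x hx => glueAnnuli_apply_of_mem hs (H ·) hx,
    fun x hx => glueAnnuli_apply_of_forall_notMem (H ·) hx⟩

end Gluing

theorem exists_strictAnti_annuli_interleaving {X : Type*} [MetricSpace X] {c : X} {u v : ℕ → X}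
    (hu : Tendsto u atTop (𝓝 c)) (hv : Tendsto v atTop (𝓝 c)) (huc : ∀ m, u m ≠ c)
    (hvc : ∀ m, v m ≠ c) {r : ℝ} (hr : 0 < r) :
    ∃ s : ℕ → ℝ, ∃ k : ℕ → ℕ, s 0 = r ∧ StrictAnti s ∧ Tendsto s atTop (𝓝 0) ∧
      Tendsto k atTop atTop ∧
      ∀ j, u (k j) ∈ annulus c (s (j + 1)) (s j) ∧ v (k j) ∈ annulus c (s (j + 1)) (s j) := by
  have hK : ∀ ρ : ℝ, ∃ m, 0 < ρ → dist (u m) c < ρ ∧ dist (v m) c < ρ := fun ρ => by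
    by_cases hρ : 0 < ρ
    · obtain ⟨m, hm⟩ := ((hu.eventually (ball_mem_nhds c hρ)).and
        (hv.eventually (ball_mem_nhds c hρ))).exists
      exact ⟨m, fun _ => hm⟩
    · exact ⟨0, fun h => absurd h hρ⟩
  choose K hK using hK
  set next : ℝ → ℝ := fun ρ => min (dist (u (K ρ)) c) (dist (v (K ρ)) c) / 2
  set s : ℕ → ℝ := fun j => next^[j] r
  have hs_succ : ∀ j, s (j + 1) = next (s j) := fun j => Function.iterate_succ_apply' next j r
  have hnext : ∀ ρ, 0 < ρ → 0 < next ρ ∧ next ρ < dist (u (K ρ)) c ∧ next ρ < dist (v (K ρ)) c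
      ∧ next ρ < ρ / 2 := by
    intro ρ hρ
    have hu' := dist_pos.2 (huc (K ρ))
    have hv' := dist_pos.2 (hvc (K ρ))
    have := hK ρ hρ
    have := min_le_left (dist (u (K ρ)) c) (dist (v (K ρ)) c)
    have := min_le_right (dist (u (K ρ)) c) (dist (v (K ρ)) c)
    simp only [next]
    refine ⟨by positivity, by linarith, by linarith, by linarith⟩
  have hs_pos : ∀ j, 0 < s j := fun j => by
    induction j with
    | zero => exact hr
    | succ j ih => exact hs_succ j ▸ (hnext _ ih).1
  have hmem : ∀ j, u (K (s j)) ∈ annulus c (s (j + 1)) (s j) ∧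
      v (K (s j)) ∈ annulus c (s (j + 1)) (s j) := fun j => by
    rw [hs_succ]
    exact ⟨⟨(hnext _ (hs_pos j)).2.1, (hK _ (hs_pos j)).1⟩,
      ⟨(hnext _ (hs_pos j)).2.2.1, (hK _ (hs_pos j)).2⟩⟩
  have hs_le : ∀ j, s j ≤ r * (1 / 2) ^ j := fun j => by
    induction j with
    | zero => simp [s]
    | succ j ih =>
      rw [hs_succ, pow_succ]
      nlinarith [(hnext _ (hs_pos j)).2.2.2]
  have hs₀ : Tendsto s atTop (𝓝 0) := squeeze_zero (fun j => (hs_pos j).le) hs_le <| by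
    simpa using (tendsto_pow_atTop_nhds_zero_of_lt_one (by norm_num : (0 : ℝ) ≤ 1 / 2)
      (by norm_num)).const_mul r
  have hk : Tendsto (u ∘ fun j => K (s j)) atTop (𝓝 c) :=
    tendsto_iff_dist_tendsto_zero.2 <| squeeze_zero (fun _ => dist_nonneg)
      (fun j => (hK _ (hs_pos j)).1.le) hs₀
  exact ⟨s, fun j => K (s j), rfl,
    strictAnti_nat_of_succ_lt fun j => (hmem j).1.1.trans (hmem j).1.2, hs₀,
    tendsto_atTop_of_tendsto_comp_of_forall_ne hk huc, hmem⟩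

namespace OpenPartialHomeomorph

variable {M E : Type*} [TopologicalSpace M] [TopologicalSpace E] (ψ : OpenPartialHomeomorph M E)
  {K : Set E}

open Classical in
theorem continuous_piecewise_conj [T2Space M] (hK : IsCompact K) (hKψ : K ⊆ ψ.target)
    {G : E ≃ₜ E} (hG : ∀ z ∉ K, G z = z) :
    Continuous (ψ.source.piecewise (ψ.symm ∘ G ∘ ψ) id) := by
  have hGψ : MapsTo G ψ.target ψ.target := G.injective.mapsTo_of_forall_notMem_eq hG hKψ
  have hKM : IsClosed (ψ.symm '' K) :=
    (hK.image_of_continuousOn (ψ.continuousOn_symm.mono hKψ)).isClosed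
  refine continuous_iff_continuousAt.2 fun x => ?_
  by_cases hx : x ∈ ψ.source
  · refine ContinuousAt.congr ?_ (eventuallyEq_of_mem (ψ.open_source.mem_nhds hx)
      fun y hy => (piecewise_eq_of_mem _ _ _ hy).symm)
    exact (ψ.continuousAt_symm (hGψ (ψ.map_source hx))).comp (f := G ∘ ψ)
      (G.continuous.continuousAt.comp (ψ.continuousAt hx))
  · refine continuousAt_id.congr (eventuallyEq_of_mem (hKM.isOpen_compl.mem_nhds
      fun h => hx ?_) fun y hy => ?_)
    · obtain ⟨z, hz, rfl⟩ := h
      exact ψ.map_target (hKψ hz)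
    by_cases hy' : y ∈ ψ.source
    · have hyK : ψ y ∉ K := fun h => hy ⟨ψ y, h, ψ.left_inv hy'⟩
      simp [piecewise_eq_of_mem _ _ _ hy', hG _ hyK, ψ.left_inv hy']
    · simp [piecewise_eq_of_notMem _ _ _ hy']

open Classical in
theorem piecewise_conj_symm_apply_piecewise_conj (hKψ : K ⊆ ψ.target)
    {G : E ≃ₜ E} (hG : ∀ z ∉ K, G z = z) (x : M) :
    ψ.source.piecewise (ψ.symm ∘ G.symm ∘ ψ) id
      (ψ.source.piecewise (ψ.symm ∘ G ∘ ψ) id x) = x := by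
  by_cases hx : x ∈ ψ.source
  · have hGx : G (ψ x) ∈ ψ.target :=
      G.injective.mapsTo_of_forall_notMem_eq hG hKψ (ψ.map_source hx)
    rw [piecewise_eq_of_mem _ _ _ hx, Function.comp_apply, Function.comp_apply,
      piecewise_eq_of_mem _ _ _ (ψ.map_target hGx)]
    simp [ψ.right_inv hGx, ψ.left_inv hx]
  · rw [piecewise_eq_of_notMem _ _ _ hx, id, piecewise_eq_of_notMem _ _ _ hx, id]

theorem exists_homeomorph_eqOn_source [T2Space M] (hK : IsCompact K) (hKψ : K ⊆ ψ.target)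
    (G : E ≃ₜ E) (hG : ∀ z ∉ K, G z = z) :
    ∃ h : M ≃ₜ M, ∀ x ∈ ψ.source, h x = ψ.symm (G (ψ x)) := by
  classical
  have hG' : ∀ z ∉ K, G.symm z = z := fun z hz => G.symm_apply_eq.2 (hG z hz).symm
  have := ψ.piecewise_conj_symm_apply_piecewise_conj hKψ hG'
  rw [G.symm_symm] at this
  exact ⟨⟨⟨_, _, ψ.piecewise_conj_symm_apply_piecewise_conj hKψ hG, this⟩,
    ψ.continuous_piecewise_conj hK hKψ hG, ψ.continuous_piecewise_conj hK hKψ hG'⟩,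
    fun x hx => piecewise_eq_of_mem _ _ _ hx⟩

end OpenPartialHomeomorph

theorem exists_homeomorph_frequently_fix_frequently_map {E : Type*} [NormedAddCommGroup E]
    [NormedSpace ℝ E] [CompleteSpace E] (hE : 1 < Module.rank ℝ E) {c : E} {u v : ℕ → E}
    (hu : Tendsto u atTop (𝓝 c)) (hv : Tendsto v atTop (𝓝 c)) (huc : ∀ m, u m ≠ c)
    (hvc : ∀ m, v m ≠ c) {r : ℝ} (hr : 0 < r) :
    ∃ G : E ≃ₜ E, G c = c ∧ (∀ x ∉ ball c r, G x = x) ∧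
      (∃ᶠ m in atTop, G (u m) = u m) ∧ ∃ᶠ m in atTop, G (u m) = v m := by
  obtain ⟨s, k, hs0, hs, hs₀, hk, hmem⟩ :=
    exists_strictAnti_annuli_interleaving hu hv huc hvc hr
  have hs_nonneg : ∀ j, 0 ≤ s j := hs.antitone.le_of_tendsto hs₀
  choose T hTuv hT using fun j =>
    (isOpen_annulus c (s (j + 1)) (s j)).exists_homeomorph_apply_eq
      (isPreconnected_annulus hE c (hs_nonneg (j + 1)) (s j)) (hmem j).1 (hmem j).2
  obtain ⟨G, hGT, hGfix⟩ := exists_homeomorph_eqOn_annuli hs hs₀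
    (fun j => if Even j then Homeomorph.refl E else T j) fun j => by
      split_ifs
      exacts [fun _ _ => rfl, hT j]
  refine ⟨G, hGfix c fun j => center_notMem_annulus c (hs_nonneg _) _,
    fun x hx => hGfix x fun j hj =>
      hx (hs0 ▸ ball_subset_ball (hs.antitone j.zero_le) (annulus_subset_ball _ _ _ hj)),
    hk.frequently (frequently_atTop.2 fun N => ⟨2 * N, by omega, ?_⟩),
    hk.frequently (frequently_atTop.2 fun N => ⟨2 * N + 1, by omega, ?_⟩)⟩
  · simp [hGT _ _ (hmem _).1]
  · simp [hGT _ _ (hmem _).1, hTuv]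

theorem ChartedSpace.exists_homeomorph_frequently_fix_frequently_map {E : Type*}
    [NormedAddCommGroup E] [NormedSpace ℝ E] [ProperSpace E] (hE : 1 < Module.rank ℝ E)
    {M : Type*} [TopologicalSpace M] [T2Space M] [ChartedSpace E M] {p : M} {y z : ℕ → M}
    (hy : Tendsto y atTop (𝓝 p)) (hz : Tendsto z atTop (𝓝 p))
    (hyp : ∀ m, y m ∈ (chartAt E p).source \ {p})
    (hzp : ∀ m, z m ∈ (chartAt E p).source \ {p}) :
    ∃ h : M ≃ₜ M, h p = p ∧ (∃ᶠ m in atTop, h (y m) = y m) ∧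
      ∃ᶠ m in atTop, h (y m) = z m := by
  set ψ := chartAt E p
  have hp : p ∈ ψ.source := mem_chart_source E p
  have hψ : ∀ {w}, w ∈ ψ.source \ {p} → ψ w ≠ ψ p := fun hw h => hw.2 (ψ.injOn hw.1 hp h)
  obtain ⟨r, hr, hrψ⟩ : ∃ r > 0, closedBall (ψ p) r ⊆ ψ.target :=
    nhds_basis_closedBall.mem_iff.1 (ψ.open_target.mem_nhds (ψ.map_source hp))
  obtain ⟨G, hGp, hG, hfix, hmap⟩ := _root_.exists_homeomorph_frequently_fix_frequently_map hE
    ((ψ.continuousAt hp).tendsto.comp hy) ((ψ.continuousAt hp).tendsto.comp hz)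
    (fun m => hψ (hyp m)) (fun m => hψ (hzp m)) hr
  obtain ⟨h, hh⟩ := ψ.exists_homeomorph_eqOn_source (isCompact_closedBall _ _) hrψ G
    fun x hx => hG x fun hx' => hx (ball_subset_closedBall hx')
  refine ⟨h, by rw [hh p hp, hGp, ψ.left_inv hp],
    hfix.mono fun m (hm : G (ψ (y m)) = ψ (y m)) => ?_,
    hmap.mono fun m (hm : G (ψ (y m)) = ψ (z m)) => ?_⟩
  · rw [hh _ (hyp m).1, hm, ψ.left_inv (hyp m).1]
  · rw [hh _ (hyp m).1, hm, ψ.left_inv (hzp m).1]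

theorem TopBlowup.eq_of_q_eq {n : ℕ} {V M : Type*} [TopologicalSpace V] [TopologicalSpace M]
    [T2Space V] [T2Space M] [ChartedSpace (EuclideanSpace ℝ (Fin n)) V]
    [ChartedSpace (EuclideanSpace ℝ (Fin n)) M] {p : M} (B : TopBlowup n V M p) {w v : V}
    (hv : B.q v ≠ p) (h : B.q w = B.q v) : w = v :=
  congrArg Subtype.val (B.homeo_off.injective (a₁ := ⟨w, (h.trans_ne hv :)⟩) (a₂ := ⟨v, hv⟩)
    (Subtype.ext h))

/-- If `q : (V,Σ) → (M,{p})` is a topological blowup of an `n`-manifold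
`M` at `p`, `n ≥ 2`, and at least two distinct points lie on the frontier of `Σ` in `V`,
then some homeomorphism `h` of `(M,{p})` admits no continuous lift through `q`. -/
theorem no_continuous_lift (n : ℕ) (hn : 2 ≤ n)
    (V M : Type*) [TopologicalSpace V] [TopologicalSpace M]
    [T2Space V] [T2Space M]
    [ChartedSpace (EuclideanSpace ℝ (Fin n)) V]
    [ChartedSpace (EuclideanSpace ℝ (Fin n)) M] (p : M)
    (B : TopBlowup n V M p)
    (a b : V) (ha : a ∈ frontier (B.q ⁻¹' {p})) (hb : b ∈ frontier (B.q ⁻¹' {p}))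
    (hab : a ≠ b) :
    ∃ h : M ≃ₜ M, h p = p ∧
      ¬ ∃ hLift : V → V, Continuous hLift ∧ B.q ∘ hLift = ⇑h ∘ B.q := by
  have hE : 1 < Module.rank ℝ (EuclideanSpace ℝ (Fin n)) := by
    rw [← Module.finrank_eq_rank, finrank_euclideanSpace_fin]
    exact_mod_cast hn
  have := ChartedSpace.firstCountableTopology (EuclideanSpace ℝ (Fin n)) (M := V)
  have hq : Continuous B.q := B.quotientMap.continuous
  have hU := (chartAt (EuclideanSpace ℝ (Fin n)) p).open_source
  obtain ⟨x, hxp, hxa, hqxa⟩ :=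
    exists_seq_tendsto_of_mem_frontier_preimage hq hU (mem_chart_source _ p) ha
  obtain ⟨x', hx'p, hx'b, hqx'b⟩ :=
    exists_seq_tendsto_of_mem_frontier_preimage hq hU (mem_chart_source _ p) hb
  obtain ⟨h, hhp, hfix, hmap⟩ :=
    ChartedSpace.exists_homeomorph_frequently_fix_frequently_map hE hqxa hqx'b hxp hx'p
  refine ⟨h, hhp, fun ⟨f, hf, hfq⟩ => hab ?_⟩
  have hfa : f a = a := tendsto_nhds_unique_of_frequently_eq ((hf.tendsto a).comp hxa) hxa
    (hfix.mono fun m hm => B.eq_of_q_eq (hxp m).2 ((congrFun hfq (x m)).trans hm))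
  have hfb : f a = b := tendsto_nhds_unique_of_frequently_eq ((hf.tendsto a).comp hxa) hx'b
    (hmap.mono fun m hm => B.eq_of_q_eq (hx'p m).2 ((congrFun hfq (x m)).trans hm))
  exact hfa.symm.trans hfb
end
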